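/- arXiv:2010.14335 — 2 statements merged into one kernel-verified Lean document; each statement's English description precedes it below -/
import Mathlib

section
/- Let H, η, M, t > 0 with η > M, and let h : ℝ → ℝ satisfy |h(τ)| ≤ H·e^{−ητ} for all τ ≥ 0. Let u : [-t,0] → ℝ be M-Lipschitz with a zero at s₀ ∈ [-t,0], and let w : [-t,0] → ℝ be such that u+w is M-Lipschitz and w(s₀) ≠ 0. Then |h(∫_{-t}^{0} 1/|u(s)+w(s)| ds)| ≤ H · (|w(s₀)|/(|w(s₀)| + M·t/2))^{η/M}. -/
/-!
Since `u (s₀) = 0`, the `M`-Lipschitz function `u + w` satisfies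
`|u s + w s| ≤ |w s₀| + M |s - s₀|`, so `∫ 1/|u + w|` dominates the explicitly computable
integral of `1 / (|w s₀| + M |s - s₀|)`, which is at least
`M⁻¹ log ((|w s₀| + M t/2) / |w s₀|)`.
Feeding this lower bound into the exponential decay of `h` turns `e^{-η τ}` into the power
`(|w s₀| / (|w s₀| + M t/2))^{η/M}`.
-/

open Set Real intervalIntegral MeasureTheory

theorem integral_one_div_const_add_mul_abs {c M L : ℝ} (hc : 0 < c) (hM : 0 < M) (hL : 0 ≤ L) :
    ∫ x in 0..L, 1 / (c + M * |x|) = M⁻¹ * log ((c + M * L) / c) := by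
  have habs : EqOn (fun x => 1 / (c + M * |x|)) (fun x => 1 / (M * x + c)) (uIcc 0 L) := by
    intro x hx
    rw [uIcc_of_le hL] at hx
    simp only [abs_of_nonneg hx.1, add_comm]
  rw [integral_congr habs, integral_comp_mul_add (fun x => 1 / x) hM.ne',
    integral_one_div_of_pos (by simpa using hc) (by positivity)]
  simp only [mul_zero, add_zero, smul_eq_mul, add_comm]

theorem integral_one_div_const_add_mul_abs_sub {c M a b s₀ : ℝ} (hc : 0 < c) (hM : 0 < M)
    (ha : a ≤ s₀) (hb : s₀ ≤ b) :
    ∫ s in a..b, 1 / (c + M * |s - s₀|) =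
      M⁻¹ * log ((c + M * (s₀ - a)) / c) + M⁻¹ * log ((c + M * (b - s₀)) / c) := by
  set g : ℝ → ℝ := fun x => 1 / (c + M * |x|)
  have hint : ∀ a b, IntervalIntegrable (fun s => g (s - s₀)) volume a b := fun a b =>
    (continuous_const.div (by fun_prop) fun s => by positivity).intervalIntegrable a b
  rw [← integral_add_adjacent_intervals (hint a s₀) (hint s₀ b), integral_comp_sub_right g,
    integral_comp_sub_right g, sub_self]
  have hreflect : ∫ x in (a - s₀)..0, g x = ∫ x in 0..(s₀ - a), g x := by
    simpa only [g, abs_neg, neg_zero, neg_sub] using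
      (integral_comp_neg (a := 0) (b := s₀ - a) g).symm
  rw [hreflect, integral_one_div_const_add_mul_abs hc hM (sub_nonneg.2 ha),
    integral_one_div_const_add_mul_abs hc hM (sub_nonneg.2 hb)]

theorem log_div_add_half_le_log_div_add_log_div {c M a b : ℝ} (hc : 0 < c) (hM : 0 ≤ M)
    (ha : 0 ≤ a) (hb : 0 ≤ b) :
    log ((c + M * (a + b) / 2) / c) ≤ log ((c + M * a) / c) + log ((c + M * b) / c) := by
  have hMa : 0 ≤ M * a := mul_nonneg hM ha
  have hMb : 0 ≤ M * b := mul_nonneg hM hb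
  rw [← log_mul (by positivity) (by positivity)]
  apply log_le_log (by positivity)
  rw [div_mul_div_comm, div_le_div_iff₀ hc (by positivity)]
  nlinarith [mul_nonneg hMa hMb]

theorem log_div_le_integral_one_div_abs {f : ℝ → ℝ} {M a b s₀ : ℝ} (hM : 0 < M)
    (hs₀ : s₀ ∈ Icc a b)
    (hf : ∀ s ∈ Icc a b, ∀ r ∈ Icc a b, |f s - f r| ≤ M * |s - r|)
    (hf0 : ∀ s ∈ Icc a b, f s ≠ 0) :
    M⁻¹ * log ((|f s₀| + M * (b - a) / 2) / |f s₀|) ≤ ∫ s in a..b, 1 / |f s| := by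
  obtain ⟨ha, hb⟩ := hs₀
  set c := |f s₀|
  have hc : 0 < c := abs_pos.2 (hf0 s₀ ⟨ha, hb⟩)
  have hcont : ContinuousOn f (Icc a b) :=
    (LipschitzOnWith.of_dist_le_mul (K := M.toNNReal) fun s hs r hr => by
      simpa only [Real.dist_eq, Real.coe_toNNReal _ hM.le] using hf s hs r hr).continuousOn
  have hcompare : ∀ s ∈ Icc a b, 1 / (c + M * |s - s₀|) ≤ 1 / |f s| := fun s hs =>
    one_div_le_one_div_of_le (abs_pos.2 (hf0 s hs)) <| by
      linarith [hf s hs s₀ ⟨ha, hb⟩, abs_sub_abs_le_abs_sub (f s) (f s₀)]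
  calc M⁻¹ * log ((c + M * (b - a) / 2) / c)
      ≤ M⁻¹ * log ((c + M * (s₀ - a)) / c) + M⁻¹ * log ((c + M * (b - s₀)) / c) := by
        rw [← mul_add]
        gcongr
        have := log_div_add_half_le_log_div_add_log_div hc hM.le (sub_nonneg.2 ha) (sub_nonneg.2 hb)
        rwa [sub_add_sub_cancel'] at this
    _ = ∫ s in a..b, 1 / (c + M * |s - s₀|) :=
        (integral_one_div_const_add_mul_abs_sub hc hM ha hb).symm
    _ ≤ ∫ s in a..b, 1 / |f s| := by
        refine integral_mono_on (ha.trans hb) ?_ ?_ hcompare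
        · exact (continuous_const.div (by fun_prop) fun s => by positivity).intervalIntegrable a b
        · refine (ContinuousOn.intervalIntegrable ?_)
          rw [uIcc_of_le (ha.trans hb)]
          exact continuousOn_const.div hcont.abs fun s hs => abs_ne_zero.2 (hf0 s hs)

theorem stmt_3_general (H η M t s₀ : ℝ) (hH : 0 < H) (hM : 0 < M) (hηM : M < η)
    (hs₀ : s₀ ∈ Icc (-t) 0)
    (h : ℝ → ℝ) (hh : ∀ τ : ℝ, 0 ≤ τ → |h τ| ≤ H * Real.exp (-(η * τ)))
    (u w : ℝ → ℝ)
    (hu0 : u s₀ = 0)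
    (huw : ∀ s ∈ Icc (-t) 0, ∀ r ∈ Icc (-t) 0,
      |(u s + w s) - (u r + w r)| ≤ M * |s - r|)
    (hw0 : w s₀ ≠ 0)
    (hreg : ∀ s ∈ Icc (-t) 0, u s + w s ≠ 0) :
    |h (∫ s in (-t)..0, 1 / |u s + w s|)| ≤
      H * (|w s₀| / (|w s₀| + M * t / 2)) ^ (η / M) := by
  set I := ∫ s in (-t)..0, 1 / |u s + w s|
  set c := |w s₀|
  have hc : 0 < c := abs_pos.2 hw0
  have hlower : M⁻¹ * log ((c + M * t / 2) / c) ≤ I := by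
    simpa only [hu0, zero_add, zero_sub, neg_neg] using
      log_div_le_integral_one_div_abs hM hs₀ huw hreg
  have hct : c ≤ c + M * t / 2 := by nlinarith [hs₀.1, hs₀.2]
  have hlog_nonneg : 0 ≤ M⁻¹ * log ((c + M * t / 2) / c) :=
    mul_nonneg (inv_nonneg.2 hM.le) (log_nonneg ((one_le_div hc).2 hct))
  calc |h I| ≤ H * exp (-(η * I)) := hh I (hlog_nonneg.trans hlower)
    _ ≤ H * exp (-(η * (M⁻¹ * log ((c + M * t / 2) / c)))) := by
        gcongr
        linarith
    _ = H * (c / (c + M * t / 2)) ^ (η / M) := by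
        rw [rpow_def_of_pos (div_pos hc (hc.trans_le hct)), log_div hc.ne' (hc.trans_le hct).ne',
          log_div (hc.trans_le hct).ne' hc.ne']
        ring_nf

/-- Combining the exponential decay of `h` with the logarithmic lower bound for the singular
integral yields the power-law estimate
`|h(∫ 1/|u+w|)| ≤ H (|w(s₀)|/(|w(s₀)| + M t/2))^(η/M)`. -/
theorem stmt_3 (H η M t s₀ : ℝ) (hH : 0 < H) (hM : 0 < M) (ht : 0 < t) (hηM : M < η)
    (hs₀ : s₀ ∈ Icc (-t) 0)
    (h : ℝ → ℝ) (hh : ∀ τ : ℝ, 0 ≤ τ → |h τ| ≤ H * Real.exp (-(η * τ)))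
    (u w : ℝ → ℝ)
    (hu : ∀ s ∈ Icc (-t) 0, ∀ r ∈ Icc (-t) 0, |u s - u r| ≤ M * |s - r|)
    (hu0 : u s₀ = 0)
    (huw : ∀ s ∈ Icc (-t) 0, ∀ r ∈ Icc (-t) 0,
      |(u s + w s) - (u r + w r)| ≤ M * |s - r|)
    (hw0 : w s₀ ≠ 0)
    (hreg : ∀ s ∈ Icc (-t) 0, u s + w s ≠ 0) :
    |h (∫ s in (-t)..0, 1 / |u s + w s|)| ≤
      H * (|w s₀| / (|w s₀| + M * t / 2)) ^ (η / M) :=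
  stmt_3_general H η M t s₀ hH hM hηM hs₀ h hh u w hu0 huw hw0 hreg
end

section
/- Let {V(t)}_{t≥0} be as in the previous statement but with A = Df(0,0) having one positive and one negative eigenvalue, with spectral decomposition ℝ² = Ẽˢ ⊕ Ẽᵘ. Define Eˢ = {φ ∈ B : φ(0) ∈ Ẽˢ} and Eᵘ = {φ ∈ B : φ(0) ∈ Ẽᵘ and φ(t) = e^{tA}φ(0) for all t ≤ 0}. Then Eˢ and Eᵘ are closed subspaces of B, B = Eˢ ⊕ Eᵘ, and both are invariant under V(t) for t ≥ 0. -/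
/-!
Membership in `Eˢ` and `Eᵘ` is given by conditions on `φ(0)` and on the values `φ(θ)`,
`θ ≤ 0`, all of which pass to limits, since convergence in the weighted norm implies pointwise
convergence. To split `φ ∈ B`, decompose `φ(0) = y + z` along `Ẽˢ ⊕ Ẽᵘ` and take
`φᵘ(θ) = e^{θA} z`, which lies in `B` by the growth bound on `Ẽᵘ`; the splitting is unique
because `Ẽˢ ∩ Ẽᵘ = 0` and an element of `Eᵘ` is determined by its value at `0`. Invariance
follows from `(V(t)φ)(0) = e^{tA} φ(0)` and, for `Eᵘ`, from `e^{(t+θ)A} = e^{θA} e^{tA}`.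
-/

open Set Filter Topology

variable {E : Type*} [NormedAddCommGroup E]

theorem tendsto_apply_of_weighted_uniform {lam : ℝ} {φseq : ℕ → ℝ → E} {φ : ℝ → E}
    (hconv : ∀ ε > (0 : ℝ), ∃ N : ℕ, ∀ n ≥ N, ∀ θ ≤ (0 : ℝ),
      Real.exp (lam * θ) * ‖φseq n θ - φ θ‖ ≤ ε)
    {θ : ℝ} (hθ : θ ≤ 0) :
    Tendsto (fun n => φseq n θ) atTop (𝓝 (φ θ)) := by
  rw [NormedAddCommGroup.tendsto_atTop]
  intro ε hε
  obtain ⟨N, hN⟩ := hconv (Real.exp (lam * θ) * (ε / 2)) (by positivity)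
  refine ⟨N, fun n hn => ?_⟩
  have : ‖φseq n θ - φ θ‖ ≤ ε / 2 := le_of_mul_le_mul_left (hN n hn θ hθ) (Real.exp_pos _)
  linarith

variable [NormedSpace ℝ E]

section ExpFlow

variable (A : E →L[ℝ] E)

theorem exp_zero_smul_apply (x : E) : NormedSpace.exp ((0 : ℝ) • A) x = x := by
  rw [zero_smul, NormedSpace.exp_zero, one_apply_eq_self]

theorem exp_add_smul_apply [CompleteSpace E] (s t : ℝ) (x : E) :
    NormedSpace.exp ((s + t) • A) x = NormedSpace.exp (s • A) (NormedSpace.exp (t • A) x) := by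
  have hball : ∀ y : E →L[ℝ] E,
      y ∈ Metric.eball (0 : E →L[ℝ] E) (NormedSpace.expSeries ℝ (E →L[ℝ] E)).radius :=
    fun _ => (NormedSpace.expSeries_radius_eq_top ℝ (E →L[ℝ] E)).symm ▸ edist_lt_top _ _
  rw [add_smul, NormedSpace.exp_add_of_commute_of_mem_ball
    (((Commute.refl A).smul_left s).smul_right t) (hball _) (hball _),
    mul_apply_eq_comp]

theorem continuous_exp_smul_apply [CompleteSpace E] (x : E) :
    Continuous fun θ : ℝ => NormedSpace.exp (θ • A) x :=
  (continuous_iff_continuousAt.2 fun t =>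
    (hasDerivAt_exp_smul_const (𝕂 := ℝ) A t).continuousAt).clm_apply continuous_const

end ExpFlow

/-- The phase space `B`. -/
def weightedSpace (lam : ℝ) : Submodule ℝ (ℝ → E) where
  carrier := {φ | ContinuousOn φ (Iic 0) ∧
    ∃ N : ℝ, ∀ θ ≤ (0 : ℝ), Real.exp (lam * θ) * ‖φ θ‖ ≤ N}
  add_mem' := by
    rintro φ ψ ⟨hφc, Nφ, hφN⟩ ⟨hψc, Nψ, hψN⟩
    refine ⟨hφc.add hψc, Nφ + Nψ, fun θ hθ => ?_⟩
    calc Real.exp (lam * θ) * ‖φ θ + ψ θ‖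
        ≤ Real.exp (lam * θ) * ‖φ θ‖ + Real.exp (lam * θ) * ‖ψ θ‖ := by
          rw [← mul_add]; gcongr; exact norm_add_le _ _
      _ ≤ Nφ + Nψ := add_le_add (hφN θ hθ) (hψN θ hθ)
  zero_mem' := ⟨continuousOn_const, 0, fun θ _ => by simp⟩
  smul_mem' := by
    rintro c φ ⟨hφc, N, hN⟩
    refine ⟨hφc.const_smul c, ‖c‖ * N, fun θ hθ => ?_⟩
    rw [Pi.smul_apply, norm_smul, mul_left_comm]
    exact mul_le_mul_of_nonneg_left (hN θ hθ) (norm_nonneg c)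

theorem mem_weightedSpace_of_bound_Iic {lam : ℝ} {φ : ℝ → E} {a N : ℝ}
    (hc : ContinuousOn φ (Iic 0)) (hN : ∀ θ ≤ a, Real.exp (lam * θ) * ‖φ θ‖ ≤ N) :
    φ ∈ weightedSpace lam := by
  have hg : ContinuousOn (fun θ => Real.exp (lam * θ) * ‖φ θ‖) (Icc a 0) :=
    (Real.continuous_exp.comp (continuous_const_mul lam)).continuousOn.mul
      ((hc.mono Icc_subset_Iic_self).norm)
  obtain ⟨C, hC⟩ := isCompact_Icc.exists_bound_of_continuousOn hg
  refine ⟨hc, max N C, fun θ hθ => ?_⟩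
  rcases le_total θ a with hθa | haθ
  · exact (hN θ hθa).trans (le_max_left _ _)
  · refine le_trans ?_ (le_max_right _ _)
    simpa [abs_of_nonneg (mul_nonneg (Real.exp_pos _).le (norm_nonneg _))] using
      hC θ ⟨haθ, hθ⟩

def expOrbits (A : E →L[ℝ] E) : Submodule ℝ (ℝ → E) where
  carrier := {φ | ∀ θ ≤ (0 : ℝ), φ θ = NormedSpace.exp (θ • A) (φ 0)}
  add_mem' hφ hψ θ hθ := by simp only [Pi.add_apply, map_add, ← hφ θ hθ, ← hψ θ hθ]
  zero_mem' θ _ := by simp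
  smul_mem' c φ hφ θ hθ := by simp only [Pi.smul_apply, map_smul, ← hφ θ hθ]

/-- `Eˢ`. -/
def stableSubspace (lam : ℝ) (S : Submodule ℝ E) : Submodule ℝ (ℝ → E) :=
  weightedSpace lam ⊓ S.comap (LinearMap.proj 0)

/-- `Eᵘ`. -/
def unstableSubspace (A : E →L[ℝ] E) (lam : ℝ) (U : Submodule ℝ E) : Submodule ℝ (ℝ → E) :=
  weightedSpace lam ⊓ (U.comap (LinearMap.proj 0) ⊓ expOrbits A)

section Splitting

variable {A : E →L[ℝ] E} {lam : ℝ} {S U : Submodule ℝ E}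

theorem mem_stableSubspace_of_tendsto (hS : IsClosed (S : Set E)) {φseq : ℕ → ℝ → E}
    {φ : ℝ → E} (hseq : ∀ n, φseq n ∈ stableSubspace lam S) (hφ : φ ∈ weightedSpace lam)
    (hlim : Tendsto (fun n => φseq n 0) atTop (𝓝 (φ 0))) :
    φ ∈ stableSubspace lam S :=
  ⟨hφ, hS.mem_of_tendsto hlim (Eventually.of_forall fun n => (hseq n).2)⟩

theorem mem_expOrbits_of_tendsto {φseq : ℕ → ℝ → E} {φ : ℝ → E}
    (hseq : ∀ n, φseq n ∈ expOrbits A)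
    (hlim : ∀ θ ≤ (0 : ℝ), Tendsto (fun n => φseq n θ) atTop (𝓝 (φ θ))) :
    φ ∈ expOrbits A := fun θ hθ =>
  tendsto_nhds_unique (hlim θ hθ) <|
    (((NormedSpace.exp (θ • A)).continuous.tendsto _).comp (hlim 0 le_rfl)).congr
      fun n => (hseq n θ hθ).symm

theorem mem_unstableSubspace_of_tendsto (hU : IsClosed (U : Set E)) {φseq : ℕ → ℝ → E}
    {φ : ℝ → E} (hseq : ∀ n, φseq n ∈ unstableSubspace A lam U) (hφ : φ ∈ weightedSpace lam)
    (hlim : ∀ θ ≤ (0 : ℝ), Tendsto (fun n => φseq n θ) atTop (𝓝 (φ θ))) :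
    φ ∈ unstableSubspace A lam U :=
  ⟨hφ, hU.mem_of_tendsto (hlim 0 le_rfl) (Eventually.of_forall fun n => (hseq n).2.1),
    mem_expOrbits_of_tendsto (fun n => (hseq n).2.2) hlim⟩

theorem expOrbit_mem_unstableSubspace [CompleteSpace E] {Cu : ℝ}
    (hgrow : ∀ θ ≤ (0 : ℝ), ∀ x ∈ U,
      ‖NormedSpace.exp (θ • A) x‖ ≤ Cu * Real.exp (-(lam * θ)) * ‖x‖)
    {x : E} (hx : x ∈ U) :
    (fun θ : ℝ => NormedSpace.exp (θ • A) x) ∈ unstableSubspace A lam U := by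
  refine ⟨⟨(continuous_exp_smul_apply A x).continuousOn, Cu * ‖x‖, fun θ hθ => ?_⟩, ?_, ?_⟩
  · calc Real.exp (lam * θ) * ‖NormedSpace.exp (θ • A) x‖
        ≤ Real.exp (lam * θ) * (Cu * Real.exp (-(lam * θ)) * ‖x‖) := by
          gcongr; exact hgrow θ hθ x hx
      _ = Cu * ‖x‖ := by
          rw [mul_comm Cu, mul_assoc, ← mul_assoc, ← Real.exp_add, add_neg_cancel,
            Real.exp_zero, one_mul]
  · simpa [LinearMap.proj_apply, exp_zero_smul_apply] using hx
  · intro θ _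
    simp only [exp_zero_smul_apply]

theorem exists_stable_add_unstable [CompleteSpace E] (hcompl : IsCompl S U) {Cu : ℝ}
    (hgrow : ∀ θ ≤ (0 : ℝ), ∀ x ∈ U,
      ‖NormedSpace.exp (θ • A) x‖ ≤ Cu * Real.exp (-(lam * θ)) * ‖x‖)
    {φ : ℝ → E} (hφ : φ ∈ weightedSpace lam) :
    ∃ φs ∈ stableSubspace lam S, ∃ φu ∈ unstableSubspace A lam U, φ = φs + φu := by
  obtain ⟨y, hy, z, hz, hyz⟩ := Submodule.mem_sup.1 (hcompl.sup_eq_top ▸ Submodule.mem_top :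
    φ 0 ∈ S ⊔ U)
  have hu := expOrbit_mem_unstableSubspace hgrow hz
  refine ⟨φ - fun θ => NormedSpace.exp (θ • A) z, ⟨sub_mem hφ hu.1, ?_⟩, _, hu,
    (sub_add_cancel _ _).symm⟩
  change φ 0 - NormedSpace.exp ((0 : ℝ) • A) z ∈ S
  rwa [exp_zero_smul_apply, ← hyz, add_sub_cancel_right]

theorem eqOn_zero_of_stable_eqOn_unstable (hdisj : Disjoint S U) {φs φu : ℝ → E}
    (hs : φs ∈ stableSubspace lam S) (hu : φu ∈ unstableSubspace A lam U)
    (h : EqOn φs φu (Iic 0)) :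
    EqOn φu 0 (Iic 0) := by
  have h0 : φu 0 = 0 :=
    Submodule.disjoint_def.1 hdisj _ (h (self_mem_Iic (a := (0 : ℝ))) ▸ hs.2) hu.2.1
  intro θ hθ
  rw [hu.2.2 θ hθ, h0, map_zero, Pi.zero_apply]

theorem eqOn_of_stable_add_unstable_eqOn (hdisj : Disjoint S U) {φs φs' φu φu' : ℝ → E}
    (hs : φs ∈ stableSubspace lam S) (hs' : φs' ∈ stableSubspace lam S)
    (hu : φu ∈ unstableSubspace A lam U) (hu' : φu' ∈ unstableSubspace A lam U)
    (h : EqOn (φs + φu) (φs' + φu') (Iic 0)) :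
    EqOn φs φs' (Iic 0) ∧ EqOn φu φu' (Iic 0) := by
  have hdiff := eqOn_zero_of_stable_eqOn_unstable hdisj (sub_mem hs hs') (sub_mem hu' hu)
    fun θ hθ => sub_eq_sub_iff_add_eq_add.2 ((h hθ).trans (add_comm _ _))
  have hu_eq : EqOn φu φu' (Iic 0) := fun θ hθ => (sub_eq_zero.1 (hdiff hθ)).symm
  refine ⟨fun θ hθ => ?_, hu_eq⟩
  have := h hθ
  rw [Pi.add_apply, Pi.add_apply, hu_eq hθ] at this
  exact add_right_cancel this

end Splitting

/-- `V(t)`: the history at time `t ≥ 0` of the solution of `x' = Ax` with initial history `φ`. -/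
noncomputable def solutionSemigroup (A : E →L[ℝ] E) (t : ℝ) (φ : ℝ → E) : ℝ → E := fun θ =>
  if θ < -t then φ (t + θ) else NormedSpace.exp ((t + θ) • A) (φ 0)

section Semigroup

variable {A : E →L[ℝ] E} {t : ℝ} {φ : ℝ → E}

theorem solutionSemigroup_eqOn_Iic :
    EqOn (solutionSemigroup A t φ) (fun θ => φ (t + θ)) (Iic (-t)) := by
  intro θ hθ
  rcases (mem_Iic.1 hθ).lt_or_eq with hlt | rfl
  · exact if_pos hlt
  · simp [solutionSemigroup]

theorem solutionSemigroup_eqOn_Ici :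
    EqOn (solutionSemigroup A t φ) (fun θ => NormedSpace.exp ((t + θ) • A) (φ 0)) (Ici (-t)) :=
  fun _ hθ => if_neg (not_lt.2 hθ)

theorem solutionSemigroup_apply_zero (ht : 0 ≤ t) :
    solutionSemigroup A t φ 0 = NormedSpace.exp (t • A) (φ 0) := by
  rw [solutionSemigroup_eqOn_Ici (mem_Ici.2 (neg_nonpos.2 ht))]
  simp only [add_zero]

theorem solutionSemigroup_mem_weightedSpace [CompleteSpace E] {lam : ℝ} (ht : 0 ≤ t)
    (hφ : φ ∈ weightedSpace lam) : solutionSemigroup A t φ ∈ weightedSpace lam := by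
  obtain ⟨hφc, N, hN⟩ := hφ
  have hmaps : MapsTo (fun θ => t + θ) (Iic (-t)) (Iic 0) := fun θ hθ => by
    simp only [mem_Iic] at hθ ⊢; linarith
  have hc : ContinuousOn (solutionSemigroup A t φ) (Iic 0) := by
    rw [← Iic_union_Icc_eq_Iic (neg_nonpos.2 ht)]
    refine ContinuousOn.union_of_isClosed ?_ ?_ isClosed_Iic isClosed_Icc
    · exact (hφc.comp (continuous_const_add t).continuousOn hmaps).congr
        solutionSemigroup_eqOn_Iic
    · exact ((continuous_exp_smul_apply A (φ 0)).comp (continuous_const_add t)).continuousOn.congr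
        (solutionSemigroup_eqOn_Ici.mono Icc_subset_Ici_self)
  refine mem_weightedSpace_of_bound_Iic (a := -t) (N := Real.exp (-(lam * t)) * N) hc
    fun θ hθ => ?_
  rw [solutionSemigroup_eqOn_Iic (mem_Iic.2 hθ),
    show lam * θ = -(lam * t) + lam * (t + θ) by ring, Real.exp_add, mul_assoc]
  exact mul_le_mul_of_nonneg_left (hN _ (hmaps (mem_Iic.2 hθ))) (Real.exp_pos _).le

theorem solutionSemigroup_mem_stableSubspace [CompleteSpace E] {lam : ℝ} {S : Submodule ℝ E}
    (ht : 0 ≤ t)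
    (hS : ∀ x ∈ S, NormedSpace.exp (t • A) x ∈ S) (hφ : φ ∈ stableSubspace lam S) :
    solutionSemigroup A t φ ∈ stableSubspace lam S := by
  refine ⟨solutionSemigroup_mem_weightedSpace ht hφ.1, ?_⟩
  change solutionSemigroup A t φ 0 ∈ S
  rw [solutionSemigroup_apply_zero ht]
  exact hS _ hφ.2

theorem solutionSemigroup_mem_unstableSubspace [CompleteSpace E] {lam : ℝ} {U : Submodule ℝ E}
    (ht : 0 ≤ t)
    (hU : ∀ x ∈ U, NormedSpace.exp (t • A) x ∈ U) (hφ : φ ∈ unstableSubspace A lam U) :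
    solutionSemigroup A t φ ∈ unstableSubspace A lam U := by
  obtain ⟨hφB, hφ0, hφorb⟩ := hφ
  have horb : ∀ θ ≤ (0 : ℝ),
      solutionSemigroup A t φ θ = NormedSpace.exp ((t + θ) • A) (φ 0) := by
    intro θ hθ
    by_cases hθt : θ < -t
    · exact (if_pos hθt).trans (hφorb _ (by linarith))
    · exact solutionSemigroup_eqOn_Ici (not_lt.1 hθt)
  refine ⟨solutionSemigroup_mem_weightedSpace ht hφB, ?_, fun θ hθ => ?_⟩
  · change solutionSemigroup A t φ 0 ∈ U
    rw [solutionSemigroup_apply_zero ht]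
    exact hU _ hφ0
  · rw [horb θ hθ, solutionSemigroup_apply_zero ht, add_comm, exp_add_smul_apply]

end Semigroup

theorem stmt_18_general (A : ℝ × ℝ →L[ℝ] ℝ × ℝ) (Ets Etu : Submodule ℝ (ℝ × ℝ))
    (hcompl : IsCompl Ets Etu)
    (hinvS : ∀ t : ℝ, ∀ x ∈ Ets, NormedSpace.exp (t • A) x ∈ Ets)
    (hinvU : ∀ t : ℝ, ∀ x ∈ Etu, NormedSpace.exp (t • A) x ∈ Etu)
    (lam Cu : ℝ)
    (hgrow : ∀ θ ≤ (0:ℝ), ∀ x ∈ Etu,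
      ‖NormedSpace.exp (θ • A) x‖ ≤ Cu * Real.exp (-(lam * θ)) * ‖x‖)
    (B Es Eu : Set (ℝ → ℝ × ℝ))
    (hB : B = {φ | ContinuousOn φ (Iic 0) ∧
      ∃ N : ℝ, ∀ θ ≤ (0:ℝ), Real.exp (lam * θ) * ‖φ θ‖ ≤ N})
    (hEs : Es = {φ ∈ B | φ 0 ∈ Ets})
    (hEu : Eu = {φ ∈ B | φ 0 ∈ Etu ∧
      ∀ θ ≤ (0:ℝ), φ θ = NormedSpace.exp (θ • A) (φ 0)})
    (V : ℝ → (ℝ → ℝ × ℝ) → (ℝ → ℝ × ℝ))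
    (hV : V = fun t φ θ =>
      if θ < -t then φ (t + θ) else NormedSpace.exp ((t + θ) • A) (φ 0)) :
    -- `Eˢ` and `Eᵘ` are subspaces
    (∀ φ ∈ Es, ∀ ψ ∈ Es, ∀ c : ℝ, φ + ψ ∈ Es ∧ c • φ ∈ Es) ∧
    (∀ φ ∈ Eu, ∀ ψ ∈ Eu, ∀ c : ℝ, φ + ψ ∈ Eu ∧ c • φ ∈ Eu) ∧
    -- `Eˢ` and `Eᵘ` are closed in `B` w.r.t. the weighted norm (sequentially)
    (∀ (φseq : ℕ → ℝ → ℝ × ℝ) (φ : ℝ → ℝ × ℝ), (∀ n, φseq n ∈ Es) → φ ∈ B →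
      (∀ ε > (0:ℝ), ∃ N : ℕ, ∀ n ≥ N, ∀ θ ≤ (0:ℝ),
        Real.exp (lam * θ) * ‖φseq n θ - φ θ‖ ≤ ε) → φ ∈ Es) ∧
    (∀ (φseq : ℕ → ℝ → ℝ × ℝ) (φ : ℝ → ℝ × ℝ), (∀ n, φseq n ∈ Eu) → φ ∈ B →
      (∀ ε > (0:ℝ), ∃ N : ℕ, ∀ n ≥ N, ∀ θ ≤ (0:ℝ),
        Real.exp (lam * θ) * ‖φseq n θ - φ θ‖ ≤ ε) → φ ∈ Eu) ∧
    -- `B = Eˢ ⊕ Eᵘ` : existence and uniqueness of the decomposition on `(-∞,0]`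
    (∀ φ ∈ B, ∃ φs ∈ Es, ∃ φu ∈ Eu, Set.EqOn φ (φs + φu) (Iic 0)) ∧
    (∀ φs ∈ Es, ∀ φu ∈ Eu, ∀ φs' ∈ Es, ∀ φu' ∈ Eu,
      Set.EqOn (φs + φu) (φs' + φu') (Iic 0) →
        Set.EqOn φs φs' (Iic 0) ∧ Set.EqOn φu φu' (Iic 0)) ∧
    -- invariance under the semigroup
    (∀ t : ℝ, 0 ≤ t → ∀ φ ∈ Es, V t φ ∈ Es) ∧
    (∀ t : ℝ, 0 ≤ t → ∀ φ ∈ Eu, V t φ ∈ Eu) := by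
  obtain rfl : B = weightedSpace (E := ℝ × ℝ) lam := hB
  obtain rfl : Es = stableSubspace lam Ets := hEs
  obtain rfl : Eu = unstableSubspace A lam Etu := hEu
  obtain rfl : V = solutionSemigroup A := hV
  refine ⟨fun φ hφ ψ hψ c => ⟨add_mem hφ hψ, Submodule.smul_mem _ c hφ⟩,
    fun φ hφ ψ hψ c => ⟨add_mem hφ hψ, Submodule.smul_mem _ c hφ⟩,
    fun φseq φ hseq hφ hconv => mem_stableSubspace_of_tendsto
      Ets.closed_of_finiteDimensional hseq hφ (tendsto_apply_of_weighted_uniform hconv le_rfl),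
    fun φseq φ hseq hφ hconv => mem_unstableSubspace_of_tendsto
      Etu.closed_of_finiteDimensional hseq hφ fun θ => tendsto_apply_of_weighted_uniform hconv,
    fun φ hφ => ?_,
    fun φs hs φu hu φs' hs' φu' hu' =>
      eqOn_of_stable_add_unstable_eqOn hcompl.disjoint hs hs' hu hu',
    fun t ht φ hφ => solutionSemigroup_mem_stableSubspace ht (hinvS t) hφ,
    fun t ht φ hφ => solutionSemigroup_mem_unstableSubspace ht (hinvU t) hφ⟩
  obtain ⟨φs, hs, φu, hu, rfl⟩ := exists_stable_add_unstable hcompl hgrow hφ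
  exact ⟨φs, hs, φu, hu, eqOn_refl _ _⟩

/-- The splitting `B = Eˢ ⊕ Eᵘ` of the weighted phase space according to the spectral
decomposition `ℝ² = Ẽˢ ⊕ Ẽᵘ` of `A = Df(0,0)`: `Eˢ` and `Eᵘ` are closed subspaces of `B`,
every `φ ∈ B` decomposes uniquely (on `(-∞,0]`) as `φ = φˢ + φᵘ`, and both subspaces are
invariant under the solution semigroup `V(t)`, `t ≥ 0`. -/
theorem stmt_18 (A : ℝ × ℝ →L[ℝ] ℝ × ℝ) (Ets Etu : Submodule ℝ (ℝ × ℝ))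
    (hcompl : IsCompl Ets Etu)
    (hinvS : ∀ t : ℝ, ∀ x ∈ Ets, NormedSpace.exp (t • A) x ∈ Ets)
    (hinvU : ∀ t : ℝ, ∀ x ∈ Etu, NormedSpace.exp (t • A) x ∈ Etu)
    (lam Cu : ℝ) (hlam : 0 < lam) (hCu : 0 < Cu)
    (hgrow : ∀ θ ≤ (0:ℝ), ∀ x ∈ Etu,
      ‖NormedSpace.exp (θ • A) x‖ ≤ Cu * Real.exp (-(lam * θ)) * ‖x‖)
    (B Es Eu : Set (ℝ → ℝ × ℝ))
    (hB : B = {φ | ContinuousOn φ (Iic 0) ∧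
      ∃ N : ℝ, ∀ θ ≤ (0:ℝ), Real.exp (lam * θ) * ‖φ θ‖ ≤ N})
    (hEs : Es = {φ ∈ B | φ 0 ∈ Ets})
    (hEu : Eu = {φ ∈ B | φ 0 ∈ Etu ∧
      ∀ θ ≤ (0:ℝ), φ θ = NormedSpace.exp (θ • A) (φ 0)})
    (V : ℝ → (ℝ → ℝ × ℝ) → (ℝ → ℝ × ℝ))
    (hV : V = fun t φ θ =>
      if θ < -t then φ (t + θ) else NormedSpace.exp ((t + θ) • A) (φ 0)) :
    -- `Eˢ` and `Eᵘ` are subspaces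
    (∀ φ ∈ Es, ∀ ψ ∈ Es, ∀ c : ℝ, φ + ψ ∈ Es ∧ c • φ ∈ Es) ∧
    (∀ φ ∈ Eu, ∀ ψ ∈ Eu, ∀ c : ℝ, φ + ψ ∈ Eu ∧ c • φ ∈ Eu) ∧
    -- `Eˢ` and `Eᵘ` are closed in `B` w.r.t. the weighted norm (sequentially)
    (∀ (φseq : ℕ → ℝ → ℝ × ℝ) (φ : ℝ → ℝ × ℝ), (∀ n, φseq n ∈ Es) → φ ∈ B →
      (∀ ε > (0:ℝ), ∃ N : ℕ, ∀ n ≥ N, ∀ θ ≤ (0:ℝ),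
        Real.exp (lam * θ) * ‖φseq n θ - φ θ‖ ≤ ε) → φ ∈ Es) ∧
    (∀ (φseq : ℕ → ℝ → ℝ × ℝ) (φ : ℝ → ℝ × ℝ), (∀ n, φseq n ∈ Eu) → φ ∈ B →
      (∀ ε > (0:ℝ), ∃ N : ℕ, ∀ n ≥ N, ∀ θ ≤ (0:ℝ),
        Real.exp (lam * θ) * ‖φseq n θ - φ θ‖ ≤ ε) → φ ∈ Eu) ∧
    -- `B = Eˢ ⊕ Eᵘ` : existence and uniqueness of the decomposition on `(-∞,0]`
    (∀ φ ∈ B, ∃ φs ∈ Es, ∃ φu ∈ Eu, Set.EqOn φ (φs + φu) (Iic 0)) ∧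
    (∀ φs ∈ Es, ∀ φu ∈ Eu, ∀ φs' ∈ Es, ∀ φu' ∈ Eu,
      Set.EqOn (φs + φu) (φs' + φu') (Iic 0) →
        Set.EqOn φs φs' (Iic 0) ∧ Set.EqOn φu φu' (Iic 0)) ∧
    -- invariance under the semigroup
    (∀ t : ℝ, 0 ≤ t → ∀ φ ∈ Es, V t φ ∈ Es) ∧
    (∀ t : ℝ, 0 ≤ t → ∀ φ ∈ Eu, V t φ ∈ Eu) :=
  stmt_18_general A Ets Etu hcompl hinvS hinvU lam Cu hgrow B Es Eu hB hEs hEu V hV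
end
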